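/- arXiv:2109.13377 — 2 statements merged into one kernel-verified Lean document; each statement's English description precedes it below -/
import Mathlib

section
/- Under the iterate hypotheses, suppose further that q̃_h(s,a) ≥ 0 for all h,s,a, that Σ_{b∈A} q̃_h(s,b) > 0 for all h,s, and that there exists a feasible occupancy measure q^f ∈ Δ with D(q^f) ≤ l. Define the policy π̃ by π̃_h(a|s) = q̃_h(s,a) / Σ_{b∈A} q̃_h(s,b). Then the occupancy measure q^{π̃} of π̃ approximately satisfies the constraint: D(q^{π̃}) ≤ l + D̄·(2H+3)·ε_oe + 2(C̄·(H+1) + ε_ol + ε_est)/B, where ε_est = (C̄ + B·D̄)·ε_oe and ε_ol = 2ε_br + 2ε_est + R/T. -/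
/-- ℓ¹ norm Σ_{h,s,a} |·| on functions {0,…,H} × S × A → ℝ. -/
def l1norm {S A : Type*} [Fintype S] [Fintype A] (H : ℕ) (q : ℕ → S → A → ℝ) : ℝ :=
  ∑ h ∈ Finset.range (H + 1), ∑ s : S, ∑ a : A, |q h s a|

/-- Weighted total cost Σ_{h,s,a} q_h(s,a) c_h(s,a). -/
def costVal {S A : Type*} [Fintype S] [Fintype A] (H : ℕ) (c q : ℕ → S → A → ℝ) : ℝ :=
  ∑ h ∈ Finset.range (H + 1), ∑ s : S, ∑ a : A, q h s a * c h s a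

/-- Lagrangian L(q, λ) = C(q) + λ[1]·(D(q) − l). -/
def lagrangian {S A : Type*} [Fintype S] [Fintype A] (H : ℕ) (c d : ℕ → S → A → ℝ)
    (l : ℝ) (q : ℕ → S → A → ℝ) (lam : ℝ × ℝ) : ℝ :=
  costVal H c q + lam.1 * (costVal H d q - l)

/-- q ∈ Δ: the linear constraints defining occupancy measures of the finite-horizon MDP
with horizon H, initial state s0 and transition kernel p (where `p h s a s'` is the
probability of moving to `s'` from `s` under `a` at step `h`). -/
def IsOccupancy {S A : Type*} [Fintype S] [Fintype A] [DecidableEq S] (H : ℕ) (s0 : S)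
    (p : ℕ → S → A → S → ℝ) (q : ℕ → S → A → ℝ) : Prop :=
  (∀ h ≤ H, ∀ (s : S) (a : A), 0 ≤ q h s a) ∧
  (∀ s : S, ∑ a : A, q 0 s a = if s = s0 then 1 else 0) ∧
  (∀ h < H, ∀ s : S, ∑ a : A, q (h + 1) s a = ∑ s' : S, ∑ a' : A, p h s' a' s * q h s' a')

/-- A policy: `π h s a` is the probability of action `a` at state `s`, step `h`. -/
def IsPolicy {S A : Type*} [Fintype A] (H : ℕ) (π : ℕ → S → A → ℝ) : Prop :=
  ∀ h ≤ H, ∀ s : S, (∀ a : A, 0 ≤ π h s a) ∧ ∑ a : A, π h s a = 1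

/-- The occupancy measure q^π of a policy π, defined recursively. -/
def occMeasure {S A : Type*} [Fintype S] [Fintype A] [DecidableEq S] (s0 : S)
    (p : ℕ → S → A → S → ℝ) (π : ℕ → S → A → ℝ) : ℕ → S → A → ℝ
  | 0 => fun s a => if s = s0 then π 0 s a else 0
  | (h + 1) => fun s a =>
      π (h + 1) s a * ∑ s' : S, ∑ a' : A, p h s' a' s * occMeasure s0 p π h s' a'

/-!
The averaged best responses `q̄` form an occupancy measure, and testing the no-regret
guarantee against the dual vector `(B, 0)` shows that `q̄` violates the constraint by at most
`(C̄ (H + 1) + ε_br + 2 ε_est + R / T) / B`; the estimates `q̃` are `ε_oe`-close to `q̄` in `ℓ¹`.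
Rolling out the policy extracted from `q̃` costs a factor `2 (H + 1)`: `q^π̃` and `q̃` share the
policy `π̃`, so at each level their distance is that of their state marginals, which the
transition kernel propagates without amplification while the mismatch between `q̃` and the true
occupancy measure `q̄` enters twice per step. As `0 ≤ d ≤ D̄`, each unit of `ℓ¹` error costs at
most `D̄` in constraint value.
-/

open Finset

lemma sum_range_le_of_recurrence {H : ℕ} {δ ε : ℕ → ℝ} (hε : ∀ h, 0 ≤ ε h) (h0 : δ 0 ≤ ε 0)
    (hsucc : ∀ n < H, δ (n + 1) ≤ δ n + ε n + ε (n + 1)) :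
    ∑ h ∈ range (H + 1), δ h ≤ 2 * (H + 1) * ∑ h ∈ range (H + 1), ε h := by
  have hpartial : ∀ h ≤ H, δ h + ε h ≤ 2 * ∑ k ∈ range (h + 1), ε k := by
    intro h hh
    induction h with
    | zero => simp only [zero_add, range_one, sum_singleton]; linarith
    | succ n ih =>
      rw [sum_range_succ]
      linarith [ih (by omega), hsucc n (by omega)]
  calc ∑ h ∈ range (H + 1), δ h ≤ ∑ _h ∈ range (H + 1), 2 * ∑ k ∈ range (H + 1), ε k := by
        refine sum_le_sum fun h hh => ?_
        have hhH := Nat.lt_succ_iff.1 (mem_range.1 hh)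
        have hmono := sum_le_sum_of_subset_of_nonneg (range_subset_range.2 (Nat.succ_le_succ hhH))
          fun k _ _ => hε k
        linarith [hpartial h hhH, hε h]
    _ = _ := by
        rw [sum_const, card_range, nsmul_eq_mul]
        push_cast
        ring

section Costs

variable {S A : Type*} [Fintype S] [Fintype A] {H : ℕ}

noncomputable def timeAvg (T : ℕ) (q : ℕ → ℕ → S → A → ℝ) : ℕ → S → A → ℝ :=
  fun h s a => (∑ t ∈ range T, q t h s a) / T

lemma l1norm_sum_le {ι : Type*} (I : Finset ι) (f : ι → ℕ → S → A → ℝ) :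
    l1norm H (fun h s a => ∑ i ∈ I, f i h s a) ≤ ∑ i ∈ I, l1norm H (f i) := by
  unfold l1norm
  calc _ ≤ ∑ h ∈ range (H + 1), ∑ s, ∑ a, ∑ i ∈ I, |f i h s a| := by
        gcongr
        exact abs_sum_le_sum_abs _ _
    _ = _ := by simp only [sum_comm (s := I)]

lemma l1norm_div_natCast (q : ℕ → S → A → ℝ) (T : ℕ) :
    l1norm H (fun h s a => q h s a / T) = l1norm H q / T := by
  simp only [l1norm, abs_div, Nat.abs_cast, sum_div]

lemma l1norm_timeAvg_sub_le {T : ℕ} (hT : 0 < T) {q q' : ℕ → ℕ → S → A → ℝ} {ε : ℝ}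
    (hqq' : ∀ t < T, l1norm H (fun h s a => q t h s a - q' t h s a) ≤ ε) :
    l1norm H (fun h s a => timeAvg T q h s a - timeAvg T q' h s a) ≤ ε := by
  have hT' : (0 : ℝ) < T := by exact_mod_cast hT
  have havg : (fun h s a => timeAvg T q h s a - timeAvg T q' h s a) =
      fun h s a => ∑ t ∈ range T, (q t h s a - q' t h s a) / T := by
    ext h s a
    simp only [timeAvg, ← sub_div, ← sum_div, sum_sub_distrib]
  calc _ ≤ ∑ t ∈ range T, l1norm H (fun h s a => (q t h s a - q' t h s a) / T) :=
        havg ▸ l1norm_sum_le _ _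
    _ ≤ ∑ _t ∈ range T, ε / T := by
        gcongr with t ht
        rw [l1norm_div_natCast]
        exact div_le_div_of_nonneg_right (hqq' t (mem_range.1 ht)) hT'.le
    _ = ε := by
        rw [sum_const, card_range, nsmul_eq_mul]
        field_simp

lemma abs_costVal_sub_le {c : ℕ → S → A → ℝ} {M : ℝ} (hc : ∀ h ≤ H, ∀ s a, |c h s a| ≤ M)
    (q q' : ℕ → S → A → ℝ) :
    |costVal H c q - costVal H c q'| ≤ M * l1norm H (fun h s a => q h s a - q' h s a) := by
  simp only [costVal, l1norm, ← sum_sub_distrib, ← sub_mul, mul_sum]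
  refine (abs_sum_le_sum_abs _ _).trans (sum_le_sum fun h hh => ?_)
  refine (abs_sum_le_sum_abs _ _).trans (sum_le_sum fun s _ => ?_)
  refine (abs_sum_le_sum_abs _ _).trans (sum_le_sum fun a _ => ?_)
  rw [abs_mul, mul_comm]
  exact mul_le_mul_of_nonneg_right (hc h (Nat.lt_succ_iff.1 (mem_range.1 hh)) s a) (abs_nonneg _)

lemma costVal_nonneg {c q : ℕ → S → A → ℝ} (hc : ∀ h ≤ H, ∀ s a, 0 ≤ c h s a)
    (hq : ∀ h ≤ H, ∀ s a, 0 ≤ q h s a) : 0 ≤ costVal H c q := by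
  refine sum_nonneg fun h hh => sum_nonneg fun s _ => sum_nonneg fun a _ => ?_
  have hhH := Nat.lt_succ_iff.1 (mem_range.1 hh)
  exact mul_nonneg (hq h hhH s a) (hc h hhH s a)

lemma costVal_timeAvg (c : ℕ → S → A → ℝ) (T : ℕ) (q : ℕ → ℕ → S → A → ℝ) :
    costVal H c (timeAvg T q) = (∑ t ∈ range T, costVal H c (q t)) / T := by
  simp only [costVal, timeAvg, div_mul_eq_mul_div, ← sum_div, sum_mul]
  simp only [sum_comm (s := range T)]

lemma abs_lagrangian_sub_le {c d : ℕ → S → A → ℝ} {Cbar Dbar : ℝ}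
    (hc : ∀ h ≤ H, ∀ s a, |c h s a| ≤ Cbar) (hd : ∀ h ≤ H, ∀ s a, |d h s a| ≤ Dbar)
    (hC0 : 0 ≤ Cbar) (hD0 : 0 ≤ Dbar) (l : ℝ) {q q' : ℕ → S → A → ℝ} {ε : ℝ}
    (hqq' : l1norm H (fun h s a => q h s a - q' h s a) ≤ ε) {μ : ℝ × ℝ} {B : ℝ} (hμ : 0 ≤ μ.1)
    (hμB : μ.1 ≤ B) :
    |lagrangian H c d l q μ - lagrangian H c d l q' μ| ≤ (Cbar + B * Dbar) * ε := by
  have hC := (abs_costVal_sub_le hc q q').trans (mul_le_mul_of_nonneg_left hqq' hC0)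
  have hD := mul_le_mul hμB ((abs_costVal_sub_le hd q q').trans (mul_le_mul_of_nonneg_left hqq' hD0))
    (abs_nonneg _) (hμ.trans hμB)
  calc _ = |(costVal H c q - costVal H c q') + μ.1 * (costVal H d q - costVal H d q')| := by
        unfold lagrangian
        ring_nf
    _ ≤ |costVal H c q - costVal H c q'| + μ.1 * |costVal H d q - costVal H d q'| := by
        rw [← abs_of_nonneg hμ, ← abs_mul, abs_of_nonneg hμ]
        exact abs_add_le _ _
    _ ≤ _ := by linarith

lemma lagrangian_timeAvg (c d : ℕ → S → A → ℝ) (l : ℝ) {T : ℕ} (hT : T ≠ 0)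
    (q : ℕ → ℕ → S → A → ℝ) (μ : ℝ × ℝ) :
    lagrangian H c d l (timeAvg T q) μ = (∑ t ∈ range T, lagrangian H c d l (q t) μ) / T := by
  have hT' : (T : ℝ) ≠ 0 := by exact_mod_cast hT
  simp only [lagrangian, costVal_timeAvg, sum_add_distrib, ← mul_sum, sum_sub_distrib, sum_const,
    card_range, nsmul_eq_mul]
  field_simp

end Costs

section Policy

variable {S A : Type*} [Fintype A] {H : ℕ}

noncomputable def policyOf (q : ℕ → S → A → ℝ) : ℕ → S → A → ℝ :=
  fun h s a => q h s a / ∑ b, q h s b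

lemma policyOf_mul_sum (q : ℕ → S → A → ℝ) {h : ℕ} {s : S} (hq : ∑ b, q h s b ≠ 0) (a : A) :
    policyOf q h s a * ∑ b, q h s b = q h s a :=
  div_mul_cancel₀ _ hq

lemma isPolicy_policyOf {q : ℕ → S → A → ℝ} (hpos : ∀ h ≤ H, ∀ s a, 0 ≤ q h s a)
    (hsum : ∀ h ≤ H, ∀ s, 0 < ∑ b, q h s b) : IsPolicy H (policyOf q) := fun h hh s =>
  ⟨fun a => div_nonneg (hpos h hh s a) (hsum h hh s).le,
    by simp only [policyOf, ← sum_div, div_self (hsum h hh s).ne']⟩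

end Policy

section Occupancy

variable {S A : Type*} [Fintype S] [Fintype A] {H : ℕ}

def IsTransitionKernel (H : ℕ) (p : ℕ → S → A → S → ℝ) : Prop :=
  ∀ h < H, ∀ (s : S) (a : A), (∀ s' : S, 0 ≤ p h s a s') ∧ ∑ s' : S, p h s a s' = 1

def levelDist (f g : ℕ → S → A → ℝ) (h : ℕ) : ℝ :=
  ∑ s, ∑ a, |f h s a - g h s a|

def marginalDist (f g : ℕ → S → A → ℝ) (h : ℕ) : ℝ :=
  ∑ s, |∑ a, f h s a - ∑ a, g h s a|

lemma levelDist_nonneg (f g : ℕ → S → A → ℝ) (h : ℕ) : 0 ≤ levelDist f g h := by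
  unfold levelDist
  positivity

lemma levelDist_comm (f g : ℕ → S → A → ℝ) (h : ℕ) : levelDist f g h = levelDist g f h := by
  simp only [levelDist, abs_sub_comm]

lemma levelDist_triangle (f g k : ℕ → S → A → ℝ) (h : ℕ) :
    levelDist f k h ≤ levelDist f g h + levelDist g k h := by
  simp only [levelDist, ← sum_add_distrib]
  gcongr
  exact abs_sub_le _ _ _

lemma marginalDist_triangle (f g k : ℕ → S → A → ℝ) (h : ℕ) :
    marginalDist f k h ≤ marginalDist f g h + marginalDist g k h := by
  simp only [marginalDist, ← sum_add_distrib]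
  gcongr
  exact abs_sub_le _ _ _

lemma marginalDist_le_levelDist (f g : ℕ → S → A → ℝ) (h : ℕ) :
    marginalDist f g h ≤ levelDist f g h := by
  simp only [marginalDist, levelDist, ← sum_sub_distrib]
  gcongr
  exact abs_sum_le_sum_abs _ _

lemma levelDist_eq_marginalDist {π f g : ℕ → S → A → ℝ} (hπ : IsPolicy H π) {h : ℕ} (hh : h ≤ H)
    (hf : ∀ s a, f h s a = π h s a * ∑ b, f h s b) (hg : ∀ s a, g h s a = π h s a * ∑ b, g h s b) :
    levelDist f g h = marginalDist f g h := by
  refine sum_congr rfl fun s _ => ?_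
  calc ∑ a, |f h s a - g h s a| = ∑ a, π h s a * |∑ b, f h s b - ∑ b, g h s b| :=
        sum_congr rfl fun a _ => by
          rw [hf s a, hg s a, ← mul_sub, abs_mul, abs_of_nonneg ((hπ h hh s).1 a)]
    _ = _ := by rw [← sum_mul, (hπ h hh s).2, one_mul]

lemma l1norm_sub_eq_sum_levelDist (f g : ℕ → S → A → ℝ) :
    l1norm H (fun h s a => f h s a - g h s a) = ∑ h ∈ range (H + 1), levelDist f g h :=
  rfl

namespace IsTransitionKernel

variable {p : ℕ → S → A → S → ℝ}

lemma sum_apply (hp : IsTransitionKernel H p) {h : ℕ} (hh : h < H) (f : S → A → ℝ) :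
    ∑ s, ∑ s', ∑ a', p h s' a' s * f s' a' = ∑ s', ∑ a', f s' a' := by
  rw [sum_comm]
  refine sum_congr rfl fun s' _ => ?_
  rw [sum_comm]
  refine sum_congr rfl fun a' _ => ?_
  rw [← sum_mul, (hp h hh s' a').2, one_mul]

lemma sum_abs_apply_le (hp : IsTransitionKernel H p) {h : ℕ} (hh : h < H) (f : S → A → ℝ) :
    ∑ s, |∑ s', ∑ a', p h s' a' s * f s' a'| ≤ ∑ s', ∑ a', |f s' a'| := by
  calc _ ≤ ∑ s, ∑ s', ∑ a', p h s' a' s * |f s' a'| := by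
        gcongr with s
        refine (abs_sum_le_sum_abs _ _).trans (sum_le_sum fun s' _ => ?_)
        refine (abs_sum_le_sum_abs _ _).trans (sum_le_sum fun a' _ => ?_)
        rw [abs_mul, abs_of_nonneg ((hp h hh s' a').1 s)]
    _ = _ := hp.sum_apply hh _

end IsTransitionKernel

variable [DecidableEq S] {s0 : S} {p : ℕ → S → A → S → ℝ}

namespace IsOccupancy

lemma sum_eq_one (hp : IsTransitionKernel H p) {q : ℕ → S → A → ℝ} (hq : IsOccupancy H s0 p q)
    {h : ℕ} (hh : h ≤ H) : ∑ s, ∑ a, q h s a = 1 := by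
  induction h with
  | zero => simp [hq.2.1]
  | succ n ih =>
    rw [sum_congr rfl fun s _ => hq.2.2 n hh s, hp.sum_apply hh, ih (by omega)]

lemma costVal_le (hp : IsTransitionKernel H p) {q : ℕ → S → A → ℝ} (hq : IsOccupancy H s0 p q)
    {c : ℕ → S → A → ℝ} {M : ℝ} (hc : ∀ h ≤ H, ∀ s a, c h s a ≤ M) :
    costVal H c q ≤ M * (H + 1) := by
  calc costVal H c q ≤ ∑ h ∈ range (H + 1), ∑ s, ∑ a, q h s a * M := by
        refine sum_le_sum fun h hh => sum_le_sum fun s _ => sum_le_sum fun a _ => ?_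
        have hhH := Nat.lt_succ_iff.1 (mem_range.1 hh)
        exact mul_le_mul_of_nonneg_left (hc h hhH s a) (hq.1 h hhH s a)
    _ = ∑ _h ∈ range (H + 1), M := by
        refine sum_congr rfl fun h hh => ?_
        simp only [← sum_mul, hq.sum_eq_one hp (Nat.lt_succ_iff.1 (mem_range.1 hh)), one_mul]
    _ = M * (H + 1) := by
        rw [sum_const, card_range, nsmul_eq_mul]
        push_cast
        ring

lemma timeAvg {T : ℕ} (hT : 0 < T) {q : ℕ → ℕ → S → A → ℝ}
    (hq : ∀ t < T, IsOccupancy H s0 p (q t)) : IsOccupancy H s0 p (timeAvg T q) := by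
  have hT' : (0 : ℝ) < T := by exact_mod_cast hT
  refine ⟨fun h hh s a => ?_, fun s => ?_, fun h hh s => ?_⟩
  · exact div_nonneg (sum_nonneg fun t ht => (hq t (mem_range.1 ht)).1 h hh s a) hT'.le
  · simp only [_root_.timeAvg]
    rw [← sum_div, sum_comm,
      sum_congr rfl fun t ht => (hq t (mem_range.1 ht)).2.1 s, sum_const, card_range, nsmul_eq_mul]
    split_ifs <;> field_simp
  · simp only [_root_.timeAvg, ← sum_div, mul_div_assoc', mul_sum]
    rw [sum_comm, sum_congr rfl fun t ht => (hq t (mem_range.1 ht)).2.2 h hh s]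
    simp only [sum_comm (s := range T)]

lemma marginalDist_zero {q q' : ℕ → S → A → ℝ} (hq : IsOccupancy H s0 p q)
    (hq' : IsOccupancy H s0 p q') : marginalDist q q' 0 = 0 := by
  simp [marginalDist, hq.2.1, hq'.2.1]

lemma marginalDist_succ_le (hp : IsTransitionKernel H p) {q q' : ℕ → S → A → ℝ}
    (hq : IsOccupancy H s0 p q) (hq' : IsOccupancy H s0 p q') {h : ℕ} (hh : h < H) :
    marginalDist q q' (h + 1) ≤ levelDist q q' h := by
  simp only [marginalDist, hq.2.2 h hh, hq'.2.2 h hh, ← sum_sub_distrib, ← mul_sub]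
  exact hp.sum_abs_apply_le hh _

end IsOccupancy

namespace IsPolicy

variable {π : ℕ → S → A → ℝ}

lemma occMeasure_eq_mul_sum (hπ : IsPolicy H π) {h : ℕ} (hh : h ≤ H) (s : S) (a : A) :
    occMeasure s0 p π h s a = π h s a * ∑ b, occMeasure s0 p π h s b := by
  cases h with
  | zero => by_cases hs : s = s0 <;> simp [occMeasure, hs, (hπ 0 hh s0).2]
  | succ n => simp only [occMeasure, ← sum_mul, (hπ (n + 1) hh s).2, one_mul]

lemma isOccupancy_occMeasure (hp : IsTransitionKernel H p) (hπ : IsPolicy H π) :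
    IsOccupancy H s0 p (occMeasure s0 p π) := by
  refine ⟨fun h hh s a => ?_, fun s => ?_, fun h hh s => ?_⟩
  · induction h generalizing s a with
    | zero => by_cases hs : s = s0 <;> simp [occMeasure, hs, (hπ 0 hh s0).1]
    | succ n ih =>
      refine mul_nonneg ((hπ _ hh s).1 a) (sum_nonneg fun s' _ => sum_nonneg fun a' _ => ?_)
      exact mul_nonneg ((hp n hh s' a').1 s) (ih (by omega) s' a')
  · rw [sum_congr rfl fun a _ => hπ.occMeasure_eq_mul_sum H.zero_le s a, ← sum_mul,
      (hπ 0 H.zero_le s).2, one_mul]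
    by_cases hs : s = s0 <;> simp [occMeasure, hs, (hπ 0 H.zero_le s0).2]
  · simp only [occMeasure, ← sum_mul, (hπ (h + 1) hh s).2, one_mul]

end IsPolicy

lemma l1norm_occMeasure_policyOf_sub_le (hp : IsTransitionKernel H p) {q q' : ℕ → S → A → ℝ}
    (hq : IsOccupancy H s0 p q) (hpos : ∀ h ≤ H, ∀ s a, 0 ≤ q' h s a)
    (hsum : ∀ h ≤ H, ∀ s, 0 < ∑ b, q' h s b) :
    l1norm H (fun h s a => occMeasure s0 p (policyOf q') h s a - q' h s a) ≤
      2 * (H + 1) * l1norm H (fun h s a => q h s a - q' h s a) := by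
  set Q := occMeasure s0 p (policyOf q')
  have hπ := isPolicy_policyOf hpos hsum
  have hQ : IsOccupancy H s0 p Q := hπ.isOccupancy_occMeasure hp
  have hlevel : ∀ h ≤ H, levelDist Q q' h = marginalDist Q q' h := fun h hh =>
    levelDist_eq_marginalDist hπ hh (hπ.occMeasure_eq_mul_sum hh)
      fun s a => (policyOf_mul_sum q' (hsum h hh s).ne' a).symm
  rw [l1norm_sub_eq_sum_levelDist, l1norm_sub_eq_sum_levelDist]
  refine sum_range_le_of_recurrence (levelDist_nonneg q q') ?_ fun n hn => ?_
  · calc levelDist Q q' 0 = marginalDist Q q' 0 := hlevel 0 H.zero_le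
      _ ≤ marginalDist Q q 0 + marginalDist q q' 0 := marginalDist_triangle _ _ _ _
      _ ≤ levelDist q q' 0 := by
        rw [hQ.marginalDist_zero hq, zero_add]
        exact marginalDist_le_levelDist _ _ _
  · calc levelDist Q q' (n + 1) = marginalDist Q q' (n + 1) := hlevel (n + 1) hn
      _ ≤ marginalDist Q q (n + 1) + marginalDist q q' (n + 1) := marginalDist_triangle _ _ _ _
      _ ≤ levelDist Q q n + levelDist q q' (n + 1) :=
        add_le_add (hQ.marginalDist_succ_le hp hq hn) (marginalDist_le_levelDist _ _ _)
      _ ≤ levelDist Q q' n + levelDist q q' n + levelDist q q' (n + 1) := by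
        linarith [levelDist_triangle Q q' q n, levelDist_comm q' q n]

theorem costVal_timeAvg_le_of_noRegret (hp : IsTransitionKernel H p) {c d : ℕ → S → A → ℝ}
    {Cbar : ℝ} (hc : ∀ h ≤ H, ∀ s a, 0 ≤ c h s a ∧ c h s a ≤ Cbar) {l B : ℝ} (hB : 0 < B)
    {T : ℕ} (hT : 0 < T) {εbr εest R : ℝ} {qt qhat : ℕ → ℕ → S → A → ℝ} {lam : ℕ → ℝ × ℝ}
    (hqt : ∀ t < T, IsOccupancy H s0 p (qt t))
    (hest : ∀ t < T, ∀ μ : ℝ × ℝ, 0 ≤ μ.1 → μ.1 ≤ B →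
      |lagrangian H c d l (qt t) μ - lagrangian H c d l (qhat t) μ| ≤ εest)
    (hlam : ∀ t < T, 0 ≤ (lam t).1 ∧ 0 ≤ (lam t).2 ∧ (lam t).1 + (lam t).2 = B)
    (hbr : ∀ t < T, ∀ q : ℕ → S → A → ℝ, IsOccupancy H s0 p q →
      lagrangian H c d l (qt t) (lam t) ≤ lagrangian H c d l q (lam t) + εbr)
    (hnr : ∀ μ : ℝ × ℝ, 0 ≤ μ.1 → 0 ≤ μ.2 → μ.1 + μ.2 = B →
      (∑ t ∈ range T, lagrangian H c d l (qhat t) μ) -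
        (∑ t ∈ range T, lagrangian H c d l (qhat t) (lam t)) ≤ R)
    {qf : ℕ → S → A → ℝ} (hqf : IsOccupancy H s0 p qf) (hqffeas : costVal H d qf ≤ l) :
    costVal H d (timeAvg T qt) ≤ l + (Cbar * (H + 1) + εbr + 2 * εest + R / T) / B := by
  have hT' : (0 : ℝ) < T := by exact_mod_cast hT
  have hbestResponse : ∀ t < T, lagrangian H c d l (qt t) (lam t) ≤ Cbar * (H + 1) + εbr := by
    intro t ht
    have hfeas := mul_nonpos_of_nonneg_of_nonpos (hlam t ht).1 (sub_nonpos.2 hqffeas)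
    have hcost := hqf.costVal_le hp fun h hh s a => (hc h hh s a).2
    have := hbr t ht qf hqf
    unfold lagrangian at this ⊢
    linarith
  have hstep : ∀ t ∈ range T, lagrangian H c d l (qt t) (B, 0) ≤
      lagrangian H c d l (qhat t) (B, 0) - lagrangian H c d l (qhat t) (lam t) +
        (Cbar * (H + 1) + εbr + 2 * εest) := by
    intro t ht
    rw [mem_range] at ht
    have hestB := (abs_le.1 (hest t ht (B, 0) hB.le le_rfl)).2
    have hestLam := (abs_le.1 (hest t ht (lam t) (hlam t ht).1 (by linarith [hlam t ht]))).1
    linarith [hbestResponse t ht]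
  have hsum := sum_le_sum hstep
  rw [sum_add_distrib, sum_sub_distrib, sum_const, card_range, nsmul_eq_mul] at hsum
  have havg : lagrangian H c d l (timeAvg T qt) (B, 0) ≤
      Cbar * (H + 1) + εbr + 2 * εest + R / T := by
    rw [lagrangian_timeAvg c d l hT.ne', div_le_iff₀ hT', add_mul, div_mul_cancel₀ _ hT'.ne']
    linarith [hnr (B, 0) hB.le le_rfl (add_zero B)]
  have hcost := costVal_nonneg (fun h hh s a => (hc h hh s a).1) (IsOccupancy.timeAvg hT hqt).1
  rw [← sub_le_iff_le_add', le_div_iff₀ hB]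
  unfold lagrangian at havg
  linarith

end Occupancy

theorem stmt8_general {S A : Type*} [Fintype S] [Fintype A] [DecidableEq S]
    (H : ℕ) (s0 : S) (p : ℕ → S → A → S → ℝ)
    (hp : ∀ h < H, ∀ (s : S) (a : A), (∀ s' : S, 0 ≤ p h s a s') ∧ ∑ s' : S, p h s a s' = 1)
    (c d : ℕ → S → A → ℝ) (Cbar Dbar : ℝ)
    (hc : ∀ h ≤ H, ∀ (s : S) (a : A), 0 ≤ c h s a ∧ c h s a ≤ Cbar)
    (hd : ∀ h ≤ H, ∀ (s : S) (a : A), 0 ≤ d h s a ∧ d h s a ≤ Dbar)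
    (l B : ℝ) (hB : 0 < B) (T : ℕ) (hT : 1 ≤ T)
    (εbr εoe R : ℝ) (hεbr : 0 ≤ εbr) (hεoe : 0 ≤ εoe) (hR : 0 ≤ R)
    (qt qhat : ℕ → ℕ → S → A → ℝ) (lam : ℕ → ℝ × ℝ)
    (hqt : ∀ t < T, IsOccupancy H s0 p (qt t))
    (hqhat : ∀ t < T, l1norm H (fun h s a => qt t h s a - qhat t h s a) ≤ εoe)
    (hlam : ∀ t < T, 0 ≤ (lam t).1 ∧ 0 ≤ (lam t).2 ∧ (lam t).1 + (lam t).2 = B)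
    (hbr : ∀ t < T, ∀ q : ℕ → S → A → ℝ, IsOccupancy H s0 p q →
      lagrangian H c d l (qt t) (lam t) ≤ lagrangian H c d l q (lam t) + εbr)
    (hnr : ∀ μ : ℝ × ℝ, 0 ≤ μ.1 → 0 ≤ μ.2 → μ.1 + μ.2 = B →
      (∑ t ∈ Finset.range T, lagrangian H c d l (qhat t) μ) -
        (∑ t ∈ Finset.range T, lagrangian H c d l (qhat t) (lam t)) ≤ R)
    (qtil : ℕ → S → A → ℝ)
    (hqtil : qtil = fun h s a => (∑ t ∈ Finset.range T, qhat t h s a) / T)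
    (hpos : ∀ h ≤ H, ∀ (s : S) (a : A), 0 ≤ qtil h s a)
    (hsum : ∀ h ≤ H, ∀ s : S, 0 < ∑ b : A, qtil h s b)
    (qf : ℕ → S → A → ℝ) (hqf : IsOccupancy H s0 p qf) (hqffeas : costVal H d qf ≤ l)
    (εest εol : ℝ) (hεest : εest = (Cbar + B * Dbar) * εoe)
    (hεol : εol = 2 * εbr + 2 * εest + R / T) :
    costVal H d (occMeasure s0 p (fun h s a => qtil h s a / ∑ b : A, qtil h s b)) ≤
      l + Dbar * (2 * (H : ℝ) + 3) * εoe +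
        2 * (Cbar * ((H : ℝ) + 1) + εol + εest) / B := by
  obtain ⟨a₀, -, -⟩ := exists_ne_zero_of_sum_ne_zero (hsum 0 H.zero_le s0).ne'
  have hC0 : 0 ≤ Cbar := (hc 0 H.zero_le s0 a₀).1.trans (hc 0 H.zero_le s0 a₀).2
  have hD0 : 0 ≤ Dbar := (hd 0 H.zero_le s0 a₀).1.trans (hd 0 H.zero_le s0 a₀).2
  have hcabs : ∀ h ≤ H, ∀ s a, |c h s a| ≤ Cbar := fun h hh s a =>
    (abs_of_nonneg (hc h hh s a).1).trans_le (hc h hh s a).2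
  have hdabs : ∀ h ≤ H, ∀ s a, |d h s a| ≤ Dbar := fun h hh s a =>
    (abs_of_nonneg (hd h hh s a).1).trans_le (hd h hh s a).2
  have hest : ∀ t < T, ∀ μ : ℝ × ℝ, 0 ≤ μ.1 → μ.1 ≤ B →
      |lagrangian H c d l (qt t) μ - lagrangian H c d l (qhat t) μ| ≤ εest := fun t ht _ hμ hμB =>
    hεest ▸ abs_lagrangian_sub_le hcabs hdabs hC0 hD0 l (hqhat t ht) hμ hμB
  have hgame := costVal_timeAvg_le_of_noRegret hp hc hB hT hqt hest hlam hbr hnr hqf hqffeas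
  have hclose : l1norm H (fun h s a => timeAvg T qt h s a - qtil h s a) ≤ εoe :=
    hqtil ▸ l1norm_timeAvg_sub_le hT hqhat
  have hpolicy := l1norm_occMeasure_policyOf_sub_le hp (IsOccupancy.timeAvg hT hqt) hpos hsum
  have hrollout := (abs_sub_le_iff.1 (abs_costVal_sub_le hdabs (occMeasure s0 p (policyOf qtil))
    qtil)).1
  have hestimate := (abs_sub_le_iff.1 (abs_costVal_sub_le hdabs (timeAvg T qt) qtil)).2
  have hrolloutErr := mul_le_mul_of_nonneg_left (hpolicy.trans
    (mul_le_mul_of_nonneg_left hclose (by positivity))) hD0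
  have hestimateErr := mul_le_mul_of_nonneg_left hclose hD0
  have hslack : (Cbar * (H + 1) + εbr + 2 * εest + R / T) / B ≤
      2 * (Cbar * (H + 1) + εol + εest) / B := by
    have : 0 ≤ εest := hεest ▸ by positivity
    gcongr
    rw [hεol]
    linarith [show 0 ≤ R / T by positivity, show 0 ≤ Cbar * (H + 1) by positivity]
  show costVal H d (occMeasure s0 p (policyOf qtil)) ≤ _
  linarith

theorem stmt8 {S A : Type*} [Fintype S] [Fintype A] [DecidableEq S] [Nonempty S] [Nonempty A]
    (H : ℕ) (s0 : S) (p : ℕ → S → A → S → ℝ)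
    (hp : ∀ h < H, ∀ (s : S) (a : A), (∀ s' : S, 0 ≤ p h s a s') ∧ ∑ s' : S, p h s a s' = 1)
    (c d : ℕ → S → A → ℝ) (Cbar Dbar : ℝ)
    (hc : ∀ h ≤ H, ∀ (s : S) (a : A), 0 ≤ c h s a ∧ c h s a ≤ Cbar)
    (hd : ∀ h ≤ H, ∀ (s : S) (a : A), 0 ≤ d h s a ∧ d h s a ≤ Dbar)
    (l B : ℝ) (hB : 0 < B) (T : ℕ) (hT : 1 ≤ T)
    (εbr εoe R : ℝ) (hεbr : 0 ≤ εbr) (hεoe : 0 ≤ εoe) (hR : 0 ≤ R)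
    (qt qhat : ℕ → ℕ → S → A → ℝ) (lam : ℕ → ℝ × ℝ)
    (hqt : ∀ t < T, IsOccupancy H s0 p (qt t))
    (hqhat : ∀ t < T, l1norm H (fun h s a => qt t h s a - qhat t h s a) ≤ εoe)
    (hlam : ∀ t < T, 0 ≤ (lam t).1 ∧ 0 ≤ (lam t).2 ∧ (lam t).1 + (lam t).2 = B)
    (hbr : ∀ t < T, ∀ q : ℕ → S → A → ℝ, IsOccupancy H s0 p q →
      lagrangian H c d l (qt t) (lam t) ≤ lagrangian H c d l q (lam t) + εbr)
    (hnr : ∀ μ : ℝ × ℝ, 0 ≤ μ.1 → 0 ≤ μ.2 → μ.1 + μ.2 = B →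
      (∑ t ∈ Finset.range T, lagrangian H c d l (qhat t) μ) -
        (∑ t ∈ Finset.range T, lagrangian H c d l (qhat t) (lam t)) ≤ R)
    (qtil : ℕ → S → A → ℝ)
    (hqtil : qtil = fun h s a => (∑ t ∈ Finset.range T, qhat t h s a) / T)
    (hpos : ∀ h ≤ H, ∀ (s : S) (a : A), 0 ≤ qtil h s a)
    (hsum : ∀ h ≤ H, ∀ s : S, 0 < ∑ b : A, qtil h s b)
    (qf : ℕ → S → A → ℝ) (hqf : IsOccupancy H s0 p qf) (hqffeas : costVal H d qf ≤ l)
    (εest εol : ℝ) (hεest : εest = (Cbar + B * Dbar) * εoe)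
    (hεol : εol = 2 * εbr + 2 * εest + R / T) :
    costVal H d (occMeasure s0 p (fun h s a => qtil h s a / ∑ b : A, qtil h s b)) ≤
      l + Dbar * (2 * (H : ℝ) + 3) * εoe +
        2 * (Cbar * ((H : ℝ) + 1) + εol + εest) / B :=
  stmt8_general H s0 p hp c d Cbar Dbar hc hd l B hB T hT εbr εoe R hεbr hεoe hR qt qhat lam hqt
    hqhat hlam hbr hnr qtil hqtil hpos hsum qf hqf hqffeas εest εol hεest hεol
end

section
/- Under the iterate hypotheses, suppose further that q̃_h(s,a) ≥ 0 for all h,s,a and that Σ_{b∈A} q̃_h(s,b) > 0 for all h,s, and define the policy π̃ by π̃_h(a|s) = q̃_h(s,a) / Σ_{b∈A} q̃_h(s,b). Then for every feasible occupancy measure q* ∈ Δ with D(q*) ≤ l, the expected objective cost of π̃ is nearly optimal: C(q^{π̃}) ≤ C(q*) + C̄·(2H+3)·ε_oe + R/T + ε_br + ε_est, where ε_est = (C̄ + B·D̄)·ε_oe. -/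
/-!
Every round satisfies `L(q̂_t, λ_t) ≤ C(q*) + ε_br + ε_est`: pass from `q̂_t` to `q_t` at ℓ¹ cost
`(C̄ + λ_t[1] D̄) ε_oe`, use the best response against `q*`, and drop the penalty of the feasible
`q*`. Since `L(·, (0, B)) = C`, the no-regret inequality at `λ = (0, B)` averages this to
`C(q̃) ≤ C(q*) + ε_br + ε_est + R/T`.

It remains to compare `q^π̃` with `q̃`, through the occupancy measure `q̄`, which is `ε_oe`-close to
`q̃`. As `q^π̃` and `q̃` share the policy `π̃`, at each step they are as far apart as their state
marginals; the marginals of the two occupancy measures `q^π̃` and `q̄` at step `h + 1` are no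
farther apart than the measures themselves at step `h`, the kernel being an ℓ¹ contraction, and
agree at step `0`. So the step-`h` distance between `q^π̃` and `q̄` grows by at most twice the
step-`(h + 1)` distance between `q̃` and `q̄`, whence `‖q^π̃ − q̄‖₁ ≤ 2(H + 1) ε_oe` and
`C(q^π̃) ≤ C(q̃) + C̄ (2H + 3) ε_oe`.
-/

open Finset

section Layers

variable {S A : Type*} [Fintype S] [Fintype A]

def layerDist (q q' : ℕ → S → A → ℝ) (h : ℕ) : ℝ :=
  ∑ s, ∑ a, |q h s a - q' h s a|

lemma l1norm_sub_eq_sum_layerDist (H : ℕ) (q q' : ℕ → S → A → ℝ) :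
    l1norm H (fun h s a => q h s a - q' h s a) = ∑ h ∈ range (H + 1), layerDist q q' h :=
  rfl

lemma l1norm_nonneg (H : ℕ) (q : ℕ → S → A → ℝ) : 0 ≤ l1norm H q := by
  unfold l1norm
  positivity

lemma layerDist_nonneg (q q' : ℕ → S → A → ℝ) (h : ℕ) : 0 ≤ layerDist q q' h := by
  unfold layerDist
  positivity

lemma layerDist_comm (q q' : ℕ → S → A → ℝ) (h : ℕ) : layerDist q q' h = layerDist q' q h := by
  simp only [layerDist, abs_sub_comm]

lemma l1norm_sub_comm (H : ℕ) (q q' : ℕ → S → A → ℝ) :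
    l1norm H (fun h s a => q h s a - q' h s a) = l1norm H (fun h s a => q' h s a - q h s a) := by
  simp only [l1norm_sub_eq_sum_layerDist, layerDist_comm q]

lemma layerDist_le_add (q q' q'' : ℕ → S → A → ℝ) (h : ℕ) :
    layerDist q q'' h ≤ layerDist q q' h + layerDist q' q'' h := by
  unfold layerDist
  rw [← sum_add_distrib]
  gcongr with s
  rw [← sum_add_distrib]
  gcongr with a
  exact abs_sub_le _ _ _

lemma sum_abs_sum_sub_le_layerDist (q q' : ℕ → S → A → ℝ) (h : ℕ) :
    ∑ s, |∑ a, q h s a - ∑ a, q' h s a| ≤ layerDist q q' h := by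
  unfold layerDist
  gcongr with s
  rw [← sum_sub_distrib]
  exact abs_sum_le_sum_abs _ _

lemma layerDist_eq_of_eq_mul (π : S → A → ℝ) (hπ : ∀ s a, 0 ≤ π s a)
    (hπ_sum : ∀ s, ∑ a, π s a = 1) (q q' : ℕ → S → A → ℝ) (h : ℕ)
    (hq : ∀ s a, q h s a = π s a * ∑ b, q h s b) (hq' : ∀ s a, q' h s a = π s a * ∑ b, q' h s b) :
    layerDist q q' h = ∑ s, |∑ a, q h s a - ∑ a, q' h s a| := by
  unfold layerDist
  refine sum_congr rfl fun s _ => ?_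
  calc ∑ a, |q h s a - q' h s a|
      = ∑ a, π s a * |∑ b, q h s b - ∑ b, q' h s b| := by
        refine sum_congr rfl fun a _ => ?_
        rw [hq s a, hq' s a, ← mul_sub, abs_mul, abs_of_nonneg (hπ s a)]
    _ = |∑ b, q h s b - ∑ b, q' h s b| := by rw [← sum_mul, hπ_sum, one_mul]

end Layers

lemma sum_abs_sum_transition_sub_le {S A : Type*} [Fintype S] [Fintype A]
    (P : S → A → S → ℝ) (hP : ∀ s a, (∀ s', 0 ≤ P s a s') ∧ ∑ s', P s a s' = 1)
    (x y : S → A → ℝ) :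
    ∑ s, |∑ s', ∑ a', P s' a' s * x s' a' - ∑ s', ∑ a', P s' a' s * y s' a'|
      ≤ ∑ s', ∑ a', |x s' a' - y s' a'| :=
  calc ∑ s, |∑ s', ∑ a', P s' a' s * x s' a' - ∑ s', ∑ a', P s' a' s * y s' a'|
      ≤ ∑ s, ∑ s', ∑ a', P s' a' s * |x s' a' - y s' a'| := by
        gcongr with s
        simp only [← sum_sub_distrib, ← mul_sub]
        refine (abs_sum_le_sum_abs _ _).trans (sum_le_sum fun s' _ => ?_)
        refine (abs_sum_le_sum_abs _ _).trans (le_of_eq (sum_congr rfl fun a' _ => ?_))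
        rw [abs_mul, abs_of_nonneg ((hP s' a').1 s)]
    _ = ∑ s', ∑ a', (∑ s, P s' a' s) * |x s' a' - y s' a'| := by
        rw [sum_comm]
        refine sum_congr rfl fun s' _ => ?_
        rw [sum_comm]
        simp only [sum_mul]
    _ = ∑ s', ∑ a', |x s' a' - y s' a'| := by simp only [(hP _ _).2, one_mul]

section Occupancy

variable {S A : Type*} [Fintype S] [Fintype A] [DecidableEq S] {H : ℕ} {s0 : S}
  {p : ℕ → S → A → S → ℝ}

lemma IsOccupancy.sum_zero_eq {q q' : ℕ → S → A → ℝ} (hq : IsOccupancy H s0 p q)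
    (hq' : IsOccupancy H s0 p q') (s : S) : ∑ a, q 0 s a = ∑ a, q' 0 s a := by
  rw [hq.2.1, hq'.2.1]

lemma IsOccupancy.sum_abs_sum_sub_succ_le
    (hp : ∀ h < H, ∀ (s : S) (a : A), (∀ s' : S, 0 ≤ p h s a s') ∧ ∑ s' : S, p h s a s' = 1)
    {q q' : ℕ → S → A → ℝ} (hq : IsOccupancy H s0 p q) (hq' : IsOccupancy H s0 p q')
    {h : ℕ} (hh : h < H) :
    ∑ s, |∑ a, q (h + 1) s a - ∑ a, q' (h + 1) s a| ≤ layerDist q q' h := by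
  simp only [hq.2.2 h hh, hq'.2.2 h hh]
  exact sum_abs_sum_transition_sub_le (p h) (hp h hh) (q h) (q' h)

end Occupancy

def HasPolicy {S A : Type*} [Fintype A] (H : ℕ) (π q : ℕ → S → A → ℝ) : Prop :=
  ∀ h ≤ H, ∀ s a, q h s a = π h s a * ∑ b, q h s b

lemma isPolicy_div_sum {S A : Type*} [Fintype A] {H : ℕ} {q : ℕ → S → A → ℝ}
    (hq : ∀ h ≤ H, ∀ s a, 0 ≤ q h s a) (hq_sum : ∀ h ≤ H, ∀ s, 0 < ∑ b, q h s b) :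
    IsPolicy H (fun h s a => q h s a / ∑ b, q h s b) := fun h hh s =>
  ⟨fun a => div_nonneg (hq h hh s a) (hq_sum h hh s).le,
    by rw [← sum_div, div_self (hq_sum h hh s).ne']⟩

lemma hasPolicy_div_sum {S A : Type*} [Fintype A] {H : ℕ} {q : ℕ → S → A → ℝ}
    (hq_sum : ∀ h ≤ H, ∀ s, 0 < ∑ b, q h s b) :
    HasPolicy H (fun h s a => q h s a / ∑ b, q h s b) q := fun h hh s _ =>
  (div_mul_cancel₀ _ (hq_sum h hh s).ne').symm

section Policy

variable {S A : Type*} [Fintype S] [Fintype A] [DecidableEq S] {H : ℕ} {s0 : S}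
  {p : ℕ → S → A → S → ℝ} {π : ℕ → S → A → ℝ}

lemma hasPolicy_occMeasure (hπ : IsPolicy H π) : HasPolicy H π (occMeasure s0 p π) := by
  rintro (_ | h) hh s a
  · by_cases hs : s = s0
    · subst hs
      simp [occMeasure, (hπ 0 hh s).2]
    · simp [occMeasure, hs]
  · simp only [occMeasure]
    rw [← sum_mul, (hπ _ hh s).2, one_mul]

lemma isOccupancy_occMeasure (hp : ∀ h < H, ∀ (s : S) (a : A) (s' : S), 0 ≤ p h s a s')
    (hπ : IsPolicy H π) : IsOccupancy H s0 p (occMeasure s0 p π) := by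
  refine ⟨fun h hh => ?_, fun s => ?_, fun h hh s => ?_⟩
  · induction h with
    | zero =>
      intro s a
      by_cases hs : s = s0
      · simpa [occMeasure, hs] using (hπ 0 hh s).1 a
      · simp [occMeasure, hs]
    | succ h ih =>
      intro s a
      have hq := ih (by omega)
      exact mul_nonneg ((hπ _ hh s).1 a) (sum_nonneg fun s' _ => sum_nonneg fun a' _ =>
        mul_nonneg (hp h (by omega) s' a' s) (hq s' a'))
  · by_cases hs : s = s0
    · simpa [occMeasure, hs] using (hπ 0 (Nat.zero_le H) s).2
    · simp [occMeasure, hs]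
  · simp only [occMeasure]
    rw [← sum_mul, (hπ (h + 1) hh s).2, one_mul]

theorem layerDist_le_of_hasPolicy
    (hp : ∀ h < H, ∀ (s : S) (a : A), (∀ s' : S, 0 ≤ p h s a s') ∧ ∑ s' : S, p h s a s' = 1)
    (hπ : IsPolicy H π) {q qbar qtil : ℕ → S → A → ℝ}
    (hq : IsOccupancy H s0 p q) (hqπ : HasPolicy H π q)
    (hqbar : IsOccupancy H s0 p qbar) (hqtil : HasPolicy H π qtil) :
    ∀ h ≤ H, layerDist q qbar h ≤ 2 * ∑ j ∈ range (h + 1), layerDist qbar qtil j := by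
  have hlayer : ∀ h ≤ H, layerDist q qbar h
      ≤ ∑ s, |∑ a, q h s a - ∑ a, qbar h s a| + 2 * layerDist qbar qtil h := by
    intro h hh
    have hmarg : ∑ s, |∑ a, q h s a - ∑ a, qtil h s a|
        ≤ ∑ s, |∑ a, q h s a - ∑ a, qbar h s a| + ∑ s, |∑ a, qbar h s a - ∑ a, qtil h s a| := by
      rw [← sum_add_distrib]
      exact sum_le_sum fun s _ => abs_sub_le _ _ _
    calc layerDist q qbar h ≤ layerDist q qtil h + layerDist qtil qbar h := layerDist_le_add _ _ _ _
      _ = ∑ s, |∑ a, q h s a - ∑ a, qtil h s a| + layerDist qbar qtil h := by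
        rw [layerDist_eq_of_eq_mul (π h) (fun s => (hπ h hh s).1) (fun s => (hπ h hh s).2) q qtil h
          (hqπ h hh) (hqtil h hh), layerDist_comm]
      _ ≤ _ := by linarith [sum_abs_sum_sub_le_layerDist qbar qtil h]
  intro h hh
  induction h with
  | zero =>
    simpa [hq.sum_zero_eq hqbar] using hlayer 0 hh
  | succ h ih =>
    have hstep := hq.sum_abs_sum_sub_succ_le hp hqbar (h := h) (by omega)
    rw [sum_range_succ]
    linarith [hlayer (h + 1) hh, ih (by omega)]

lemma l1norm_sub_le_of_hasPolicy
    (hp : ∀ h < H, ∀ (s : S) (a : A), (∀ s' : S, 0 ≤ p h s a s') ∧ ∑ s' : S, p h s a s' = 1)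
    (hπ : IsPolicy H π) {q qbar qtil : ℕ → S → A → ℝ}
    (hq : IsOccupancy H s0 p q) (hqπ : HasPolicy H π q)
    (hqbar : IsOccupancy H s0 p qbar) (hqtil : HasPolicy H π qtil) :
    l1norm H (fun h s a => q h s a - qbar h s a)
      ≤ 2 * (H + 1) * l1norm H (fun h s a => qbar h s a - qtil h s a) := by
  simp only [l1norm_sub_eq_sum_layerDist]
  calc ∑ h ∈ range (H + 1), layerDist q qbar h
      ≤ ∑ _h ∈ range (H + 1), 2 * ∑ j ∈ range (H + 1), layerDist qbar qtil j := by
        refine sum_le_sum fun h hh => (layerDist_le_of_hasPolicy hp hπ hq hqπ hqbar hqtil h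
          (mem_range_succ_iff.mp hh)).trans ?_
        gcongr
        · exact fun j _ _ => layerDist_nonneg _ _ _
        · exact mem_range_succ_iff.mp hh
    _ = 2 * (H + 1) * ∑ j ∈ range (H + 1), layerDist qbar qtil j := by
        rw [sum_const, card_range, nsmul_eq_mul]
        push_cast
        ring

end Policy

section Bounds

variable {S A : Type*} [Fintype S] [Fintype A] {H : ℕ}

lemma costVal_le_add_mul_l1norm {c : ℕ → S → A → ℝ} {Cbar : ℝ}
    (hc : ∀ h ≤ H, ∀ (s : S) (a : A), 0 ≤ c h s a ∧ c h s a ≤ Cbar) (q q' : ℕ → S → A → ℝ) :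
    costVal H c q ≤ costVal H c q' + Cbar * l1norm H (fun h s a => q h s a - q' h s a) := by
  rw [← sub_le_iff_le_add']
  unfold costVal l1norm
  simp only [mul_sum, ← sum_sub_distrib]
  gcongr with h hh s _ a _
  obtain ⟨hc0, hcC⟩ := hc h (mem_range_succ_iff.mp hh) s a
  calc q h s a * c h s a - q' h s a * c h s a = (q h s a - q' h s a) * c h s a := by ring
    _ ≤ |q h s a - q' h s a| * c h s a := by gcongr; exact le_abs_self _
    _ ≤ Cbar * |q h s a - q' h s a| := by rw [mul_comm]; gcongr

lemma lagrangian_le_add_mul_l1norm {c d : ℕ → S → A → ℝ} {Cbar Dbar l : ℝ}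
    (hc : ∀ h ≤ H, ∀ (s : S) (a : A), 0 ≤ c h s a ∧ c h s a ≤ Cbar)
    (hd : ∀ h ≤ H, ∀ (s : S) (a : A), 0 ≤ d h s a ∧ d h s a ≤ Dbar)
    {lam : ℝ × ℝ} (hlam : 0 ≤ lam.1) (q q' : ℕ → S → A → ℝ) :
    lagrangian H c d l q lam ≤ lagrangian H c d l q' lam
      + (Cbar + lam.1 * Dbar) * l1norm H (fun h s a => q h s a - q' h s a) := by
  have hC := costVal_le_add_mul_l1norm hc q q'
  have hD := mul_le_mul_of_nonneg_left (costVal_le_add_mul_l1norm hd q q') hlam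
  unfold lagrangian
  linarith

lemma lagrangian_le_costVal {c d q : ℕ → S → A → ℝ} {l : ℝ} (hq : costVal H d q ≤ l)
    {lam : ℝ × ℝ} (hlam : 0 ≤ lam.1) : lagrangian H c d l q lam ≤ costVal H c q := by
  have := mul_nonpos_of_nonneg_of_nonpos hlam (sub_nonpos.mpr hq)
  unfold lagrangian
  linarith

lemma lagrangian_zero_fst (c d : ℕ → S → A → ℝ) (l B : ℝ) (q : ℕ → S → A → ℝ) :
    lagrangian H c d l q (0, B) = costVal H c q := by
  simp [lagrangian]

end Bounds

section Average

variable {S A : Type*} [Fintype S] [Fintype A] {H T : ℕ}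

noncomputable def timeAverage (T : ℕ) (q : ℕ → ℕ → S → A → ℝ) : ℕ → S → A → ℝ :=
  fun h s a => (∑ t ∈ range T, q t h s a) / T

lemma costVal_timeAverage (c : ℕ → S → A → ℝ) (q : ℕ → ℕ → S → A → ℝ) :
    costVal H c (timeAverage T q) = (∑ t ∈ range T, costVal H c (q t)) / T := by
  simp only [costVal, timeAverage, div_mul_eq_mul_div, sum_mul, ← sum_div]
  simp_rw [sum_comm (t := range T)]

lemma l1norm_timeAverage_sub_le {q q' : ℕ → ℕ → S → A → ℝ} {ε : ℝ} (hT : 0 < T)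
    (hqq' : ∀ t < T, l1norm H (fun h s a => q t h s a - q' t h s a) ≤ ε) :
    l1norm H (fun h s a => timeAverage T q h s a - timeAverage T q' h s a) ≤ ε := by
  have hT' : (0 : ℝ) < T := by exact_mod_cast hT
  have hpt : ∀ h s a, |timeAverage T q h s a - timeAverage T q' h s a|
      ≤ (∑ t ∈ range T, |q t h s a - q' t h s a|) / T := fun h s a => by
    rw [timeAverage, timeAverage, ← sub_div, ← sum_sub_distrib, abs_div, Nat.abs_cast]
    gcongr
    exact abs_sum_le_sum_abs _ _
  calc l1norm H (fun h s a => timeAverage T q h s a - timeAverage T q' h s a)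
      ≤ ∑ h ∈ range (H + 1), ∑ s, ∑ a, (∑ t ∈ range T, |q t h s a - q' t h s a|) / T := by
        unfold l1norm
        gcongr with h _ s _ a _
        exact hpt h s a
    _ = (∑ t ∈ range T, l1norm H (fun h s a => q t h s a - q' t h s a)) / T := by
        simp only [l1norm, ← sum_div]
        simp_rw [sum_comm (t := range T)]
    _ ≤ (∑ _t ∈ range T, ε) / T := by
        gcongr with t ht
        exact hqq' t (mem_range.mp ht)
    _ = ε := by rw [sum_const, card_range, nsmul_eq_mul, mul_div_cancel_left₀ _ hT'.ne']

lemma IsOccupancy.timeAverage [DecidableEq S] {s0 : S} {p : ℕ → S → A → S → ℝ}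
    {q : ℕ → ℕ → S → A → ℝ} (hT : 0 < T) (hq : ∀ t < T, IsOccupancy H s0 p (q t)) :
    IsOccupancy H s0 p (timeAverage T q) := by
  have hT' : (T : ℝ) ≠ 0 := by positivity
  refine ⟨fun h hh s a => ?_, fun s => ?_, fun h hh s => ?_⟩
  · exact div_nonneg (sum_nonneg fun t ht => (hq t (mem_range.mp ht)).1 h hh s a) (by positivity)
  · simp only [_root_.timeAverage, ← sum_div]
    rw [sum_comm, sum_congr rfl fun t ht => (hq t (mem_range.mp ht)).2.1 s]
    split_ifs <;> simp [hT']
  · simp only [_root_.timeAverage, mul_div_assoc', ← sum_div, mul_sum]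
    rw [sum_comm, sum_congr rfl fun t ht => (hq t (mem_range.mp ht)).2.2 h hh s]
    simp_rw [sum_comm (t := range T)]

end Average

section Game

variable {S A : Type*} [Fintype S] [Fintype A] {H : ℕ} {c d : ℕ → S → A → ℝ} {Cbar Dbar l B : ℝ}

lemma lagrangian_le_of_bestResponse
    (hc : ∀ h ≤ H, ∀ (s : S) (a : A), 0 ≤ c h s a ∧ c h s a ≤ Cbar)
    (hd : ∀ h ≤ H, ∀ (s : S) (a : A), 0 ≤ d h s a ∧ d h s a ≤ Dbar) (hCbar : 0 ≤ Cbar)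
    (hDbar : 0 ≤ Dbar) {lam : ℝ × ℝ} (hlam : 0 ≤ lam.1) (hlamB : lam.1 ≤ B)
    {q qhat qstar : ℕ → S → A → ℝ} {ε εbr : ℝ}
    (hdist : l1norm H (fun h s a => q h s a - qhat h s a) ≤ ε)
    (hbr : lagrangian H c d l q lam ≤ lagrangian H c d l qstar lam + εbr)
    (hfeas : costVal H d qstar ≤ l) :
    lagrangian H c d l qhat lam ≤ costVal H c qstar + εbr + (Cbar + B * Dbar) * ε := by
  have hweight : Cbar + lam.1 * Dbar ≤ Cbar + B * Dbar := by gcongr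
  calc lagrangian H c d l qhat lam
      ≤ lagrangian H c d l q lam
          + (Cbar + lam.1 * Dbar) * l1norm H (fun h s a => qhat h s a - q h s a) :=
        lagrangian_le_add_mul_l1norm hc hd hlam qhat q
    _ ≤ lagrangian H c d l q lam + (Cbar + B * Dbar) * ε := by
        rw [l1norm_sub_comm]
        gcongr
        · exact l1norm_nonneg _ _
        · exact add_nonneg hCbar (mul_nonneg (hlam.trans hlamB) hDbar)
    _ ≤ costVal H c qstar + εbr + (Cbar + B * Dbar) * ε := by
        linarith [lagrangian_le_costVal (c := c) hfeas hlam]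

theorem costVal_timeAverage_le_of_noRegret
    (hc : ∀ h ≤ H, ∀ (s : S) (a : A), 0 ≤ c h s a ∧ c h s a ≤ Cbar)
    (hd : ∀ h ≤ H, ∀ (s : S) (a : A), 0 ≤ d h s a ∧ d h s a ≤ Dbar) (hCbar : 0 ≤ Cbar)
    (hDbar : 0 ≤ Dbar) {T : ℕ} (hT : 0 < T) {εbr εoe R : ℝ}
    {qt qhat : ℕ → ℕ → S → A → ℝ} {lam : ℕ → ℝ × ℝ} {qstar : ℕ → S → A → ℝ}
    (hqhat : ∀ t < T, l1norm H (fun h s a => qt t h s a - qhat t h s a) ≤ εoe)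
    (hlam : ∀ t < T, 0 ≤ (lam t).1 ∧ 0 ≤ (lam t).2 ∧ (lam t).1 + (lam t).2 = B)
    (hbr : ∀ t < T, lagrangian H c d l (qt t) (lam t) ≤ lagrangian H c d l qstar (lam t) + εbr)
    (hnr : (∑ t ∈ range T, lagrangian H c d l (qhat t) (0, B)) -
        (∑ t ∈ range T, lagrangian H c d l (qhat t) (lam t)) ≤ R)
    (hfeas : costVal H d qstar ≤ l) :
    costVal H c (timeAverage T qhat)
      ≤ costVal H c qstar + εbr + (Cbar + B * Dbar) * εoe + R / T := by
  set K := costVal H c qstar + εbr + (Cbar + B * Dbar) * εoe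
  have hround : ∑ t ∈ range T, lagrangian H c d l (qhat t) (lam t) ≤ T * K := by
    calc ∑ t ∈ range T, lagrangian H c d l (qhat t) (lam t) ≤ ∑ _t ∈ range T, K := by
          refine sum_le_sum fun t ht => ?_
          obtain ⟨hlam1, hlam2, hlamB⟩ := hlam t (mem_range.mp ht)
          exact lagrangian_le_of_bestResponse hc hd hCbar hDbar hlam1 (by linarith)
            (hqhat t (mem_range.mp ht)) (hbr t (mem_range.mp ht)) hfeas
      _ = T * K := by rw [sum_const, card_range, nsmul_eq_mul]
  simp only [lagrangian_zero_fst] at hnr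
  have hT' : (0 : ℝ) < T := by exact_mod_cast hT
  rw [costVal_timeAverage, div_le_iff₀ hT', add_mul, div_mul_cancel₀ _ hT'.ne']
  linarith

end Game

theorem stmt9_general {S A : Type*} [Fintype S] [Fintype A] [DecidableEq S] [Nonempty A]
    (H : ℕ) (s0 : S) (p : ℕ → S → A → S → ℝ)
    (hp : ∀ h < H, ∀ (s : S) (a : A), (∀ s' : S, 0 ≤ p h s a s') ∧ ∑ s' : S, p h s a s' = 1)
    (c d : ℕ → S → A → ℝ) (Cbar Dbar : ℝ)
    (hc : ∀ h ≤ H, ∀ (s : S) (a : A), 0 ≤ c h s a ∧ c h s a ≤ Cbar)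
    (hd : ∀ h ≤ H, ∀ (s : S) (a : A), 0 ≤ d h s a ∧ d h s a ≤ Dbar)
    (l B : ℝ) (hB : 0 < B) (T : ℕ) (hT : 1 ≤ T)
    (εbr εoe R : ℝ)
    (qt qhat : ℕ → ℕ → S → A → ℝ) (lam : ℕ → ℝ × ℝ)
    (hqt : ∀ t < T, IsOccupancy H s0 p (qt t))
    (hqhat : ∀ t < T, l1norm H (fun h s a => qt t h s a - qhat t h s a) ≤ εoe)
    (hlam : ∀ t < T, 0 ≤ (lam t).1 ∧ 0 ≤ (lam t).2 ∧ (lam t).1 + (lam t).2 = B)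
    (hbr : ∀ t < T, ∀ q : ℕ → S → A → ℝ, IsOccupancy H s0 p q →
      lagrangian H c d l (qt t) (lam t) ≤ lagrangian H c d l q (lam t) + εbr)
    (hnr : ∀ μ : ℝ × ℝ, 0 ≤ μ.1 → 0 ≤ μ.2 → μ.1 + μ.2 = B →
      (∑ t ∈ Finset.range T, lagrangian H c d l (qhat t) μ) -
        (∑ t ∈ Finset.range T, lagrangian H c d l (qhat t) (lam t)) ≤ R)
    (qtil : ℕ → S → A → ℝ)
    (hqtil : qtil = fun h s a => (∑ t ∈ Finset.range T, qhat t h s a) / T)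
    (hpos : ∀ h ≤ H, ∀ (s : S) (a : A), 0 ≤ qtil h s a)
    (hsum : ∀ h ≤ H, ∀ s : S, 0 < ∑ b : A, qtil h s b)
    (εest : ℝ) (hεest : εest = (Cbar + B * Dbar) * εoe) :
    ∀ qstar : ℕ → S → A → ℝ, IsOccupancy H s0 p qstar → costVal H d qstar ≤ l →
      costVal H c (occMeasure s0 p (fun h s a => qtil h s a / ∑ b : A, qtil h s b)) ≤
        costVal H c qstar + Cbar * (2 * (H : ℝ) + 3) * εoe + R / T + εbr + εest := by
  intro qstar hqstar hfeas
  obtain ⟨a⟩ := ‹Nonempty A›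
  have hCbar : 0 ≤ Cbar := (hc 0 H.zero_le s0 a).1.trans (hc 0 H.zero_le s0 a).2
  have hDbar : 0 ≤ Dbar := (hd 0 H.zero_le s0 a).1.trans (hd 0 H.zero_le s0 a).2
  replace hqtil : qtil = timeAverage T qhat := hqtil
  set π : ℕ → S → A → ℝ := fun h s a => qtil h s a / ∑ b : A, qtil h s b
  have hπ : IsPolicy H π := isPolicy_div_sum hpos hsum
  have hqtilπ : HasPolicy H π qtil := hasPolicy_div_sum hsum
  have hqbar : IsOccupancy H s0 p (timeAverage T qt) := .timeAverage hT hqt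
  have hdist : l1norm H (fun h s a => timeAverage T qt h s a - qtil h s a) ≤ εoe :=
    hqtil ▸ l1norm_timeAverage_sub_le hT hqhat
  have hsim := l1norm_sub_le_of_hasPolicy hp hπ
    (isOccupancy_occMeasure (fun h hh s a => (hp h hh s a).1) hπ) (hasPolicy_occMeasure hπ)
    hqbar hqtilπ
  have hgame : costVal H c qtil ≤ costVal H c qstar + εbr + εest + R / T := by
    rw [hεest, hqtil]
    exact costVal_timeAverage_le_of_noRegret hc hd hCbar hDbar hT hqhat hlam
      (fun t ht => hbr t ht qstar hqstar) (hnr (0, B) le_rfl hB.le (zero_add B)) hfeas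
  calc costVal H c (occMeasure s0 p π)
      ≤ costVal H c (timeAverage T qt)
          + Cbar * l1norm H (fun h s a => occMeasure s0 p π h s a - timeAverage T qt h s a) :=
        costVal_le_add_mul_l1norm hc _ _
    _ ≤ (costVal H c qtil + Cbar * εoe) + Cbar * (2 * (H + 1) * εoe) := by
        gcongr
        · exact (costVal_le_add_mul_l1norm hc _ _).trans (by gcongr)
        · exact hsim.trans (by gcongr)
    _ = costVal H c qtil + Cbar * (2 * H + 3) * εoe := by ring
    _ ≤ _ := by linarith

theorem stmt9 {S A : Type*} [Fintype S] [Fintype A] [DecidableEq S] [Nonempty S] [Nonempty A]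
    (H : ℕ) (s0 : S) (p : ℕ → S → A → S → ℝ)
    (hp : ∀ h < H, ∀ (s : S) (a : A), (∀ s' : S, 0 ≤ p h s a s') ∧ ∑ s' : S, p h s a s' = 1)
    (c d : ℕ → S → A → ℝ) (Cbar Dbar : ℝ)
    (hc : ∀ h ≤ H, ∀ (s : S) (a : A), 0 ≤ c h s a ∧ c h s a ≤ Cbar)
    (hd : ∀ h ≤ H, ∀ (s : S) (a : A), 0 ≤ d h s a ∧ d h s a ≤ Dbar)
    (l B : ℝ) (hB : 0 < B) (T : ℕ) (hT : 1 ≤ T)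
    (εbr εoe R : ℝ) (hεbr : 0 ≤ εbr) (hεoe : 0 ≤ εoe) (hR : 0 ≤ R)
    (qt qhat : ℕ → ℕ → S → A → ℝ) (lam : ℕ → ℝ × ℝ)
    (hqt : ∀ t < T, IsOccupancy H s0 p (qt t))
    (hqhat : ∀ t < T, l1norm H (fun h s a => qt t h s a - qhat t h s a) ≤ εoe)
    (hlam : ∀ t < T, 0 ≤ (lam t).1 ∧ 0 ≤ (lam t).2 ∧ (lam t).1 + (lam t).2 = B)
    (hbr : ∀ t < T, ∀ q : ℕ → S → A → ℝ, IsOccupancy H s0 p q →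
      lagrangian H c d l (qt t) (lam t) ≤ lagrangian H c d l q (lam t) + εbr)
    (hnr : ∀ μ : ℝ × ℝ, 0 ≤ μ.1 → 0 ≤ μ.2 → μ.1 + μ.2 = B →
      (∑ t ∈ Finset.range T, lagrangian H c d l (qhat t) μ) -
        (∑ t ∈ Finset.range T, lagrangian H c d l (qhat t) (lam t)) ≤ R)
    (qtil : ℕ → S → A → ℝ)
    (hqtil : qtil = fun h s a => (∑ t ∈ Finset.range T, qhat t h s a) / T)
    (hpos : ∀ h ≤ H, ∀ (s : S) (a : A), 0 ≤ qtil h s a)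
    (hsum : ∀ h ≤ H, ∀ s : S, 0 < ∑ b : A, qtil h s b)
    (εest : ℝ) (hεest : εest = (Cbar + B * Dbar) * εoe) :
    ∀ qstar : ℕ → S → A → ℝ, IsOccupancy H s0 p qstar → costVal H d qstar ≤ l →
      costVal H c (occMeasure s0 p (fun h s a => qtil h s a / ∑ b : A, qtil h s b)) ≤
        costVal H c qstar + Cbar * (2 * (H : ℝ) + 3) * εoe + R / T + εbr + εest :=
  stmt9_general H s0 p hp c d Cbar Dbar hc hd l B hB T hT εbr εoe R qt qhat lam hqt hqhat hlam hbr
    hnr qtil hqtil hpos hsum εest hεest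
end
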